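/- arXiv:0808.1568 — 6 statements merged into one kernel-verified Lean document; each statement's English description precedes it below -/
import Mathlib

section
/- For every λ in (1/2, 1), the largest nearest-neighbor gap of A'_N(λ) equals exactly λ^{N-1}. -/
/-!
Every element of `A'_{n+1}(λ)` is `b + λ z` with `b ∈ {0, 1}` and `z ∈ A'_n(λ)`. By induction on
`n` this self-similarity shows that, as soon as `λ ≥ 1/2`, the translates `z + [0, λ^n)` of the
points `z ∈ A'_{n+1}(λ)` cover `[0, 1 + λ + ⋯ + λ^n)`: the images `λ·[0, S)` and `1 + λ·[0, S)` of
the interval for `n` leave a hole `[λ S, 1)` only when `λ < 1/2`. Hence no gap exceeds `λ^n`.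
Conversely every non-zero element is at least `λ^n` when `λ ≤ 1`, so the gap from `0` to `λ^n`
is exactly `λ^n`.
-/

/-- The set `A'_N(λ) = { Σ_{n=0}^{N-1} a_n λ^n : a_n ∈ {0,1} }`. -/
def Aprime (lam : ℝ) (N : ℕ) : Set ℝ :=
  {x | ∃ a : Fin N → Bool, x = ∑ n : Fin N, if a n then lam ^ (n : ℕ) else 0}

section Aprime

variable {lam : ℝ}

theorem zero_mem_aprime (lam : ℝ) (N : ℕ) : (0 : ℝ) ∈ Aprime lam N :=
  ⟨fun _ => false, by simp⟩

theorem geom_sum_mem_aprime (lam : ℝ) (N : ℕ) :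
    ∑ i ∈ Finset.range N, lam ^ i ∈ Aprime lam N :=
  ⟨fun _ => true, by simp [Fin.sum_univ_eq_sum_range]⟩

theorem pow_mem_aprime (lam : ℝ) (n : ℕ) : lam ^ n ∈ Aprime lam (n + 1) := by
  refine ⟨fun i => decide ((i : ℕ) = n), ?_⟩
  simp only [decide_eq_true_eq]
  rw [Fin.sum_univ_eq_sum_range (fun i => if i = n then lam ^ i else 0),
    Finset.sum_ite_eq' _ _ _, if_pos (Finset.self_mem_range_succ n)]

theorem ite_add_mul_mem_aprime_succ {N : ℕ} {z : ℝ} (hz : z ∈ Aprime lam N) (b : Bool) :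
    (if b then (1 : ℝ) else 0) + lam * z ∈ Aprime lam (N + 1) := by
  obtain ⟨a, rfl⟩ := hz
  refine ⟨Fin.cons b a, ?_⟩
  simp [Fin.sum_univ_succ, Finset.mul_sum, mul_ite, pow_succ, mul_comm]

theorem mul_mem_aprime_succ {N : ℕ} {z : ℝ} (hz : z ∈ Aprime lam N) :
    lam * z ∈ Aprime lam (N + 1) := by
  simpa using ite_add_mul_mem_aprime_succ hz false

theorem aprime_nonneg (hlam : 0 ≤ lam) {N : ℕ} {x : ℝ} (hx : x ∈ Aprime lam N) : 0 ≤ x := by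
  obtain ⟨a, rfl⟩ := hx
  exact Finset.sum_nonneg fun i _ => by split <;> positivity

theorem le_geom_sum_of_mem_aprime (hlam : 0 ≤ lam) {N : ℕ} {x : ℝ} (hx : x ∈ Aprime lam N) :
    x ≤ ∑ i ∈ Finset.range N, lam ^ i := by
  obtain ⟨a, rfl⟩ := hx
  rw [← Fin.sum_univ_eq_sum_range]
  exact Finset.sum_le_sum fun i _ => by split <;> simp [pow_nonneg hlam]

theorem pow_le_of_mem_aprime (hlam₀ : 0 ≤ lam) (hlam₁ : lam ≤ 1) {n : ℕ} {z : ℝ}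
    (hz : z ∈ Aprime lam (n + 1)) (hz₀ : z ≠ 0) : lam ^ n ≤ z := by
  obtain ⟨a, rfl⟩ := hz
  obtain ⟨i, hi⟩ : ∃ i, a i = true := by
    by_contra! h
    exact hz₀ (by simp [h])
  calc lam ^ n ≤ lam ^ (i : ℕ) := pow_le_pow_of_le_one hlam₀ hlam₁ (Nat.lt_succ_iff.mp i.2)
    _ = if a i then lam ^ (i : ℕ) else 0 := by rw [if_pos hi]
    _ ≤ _ := Finset.single_le_sum (f := fun j => if a j then lam ^ (j : ℕ) else 0)
      (fun j _ => by split <;> positivity) (Finset.mem_univ i)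

theorem exists_mem_aprime_le_lt_add (hlam : 1 / 2 ≤ lam) (n : ℕ) {t : ℝ} (ht₀ : 0 ≤ t)
    (ht : t < ∑ i ∈ Finset.range (n + 1), lam ^ i) :
    ∃ z ∈ Aprime lam (n + 1), z ≤ t ∧ t < z + lam ^ n := by
  have hpos : 0 < lam := by linarith
  induction n generalizing t with
  | zero => exact ⟨0, zero_mem_aprime lam 1, ht₀, by simpa using ht⟩
  | succ n ih =>
    set S := ∑ i ∈ Finset.range (n + 1), lam ^ i
    rw [geom_sum_succ] at ht
    have rescale (b : Bool) (hb₀ : (if b then (1 : ℝ) else 0) ≤ t)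
        (hb₁ : t < (if b then (1 : ℝ) else 0) + lam * S) :
        ∃ z ∈ Aprime lam (n + 2), z ≤ t ∧ t < z + lam ^ (n + 1) := by
      set c : ℝ := if b then 1 else 0
      obtain ⟨z, hz, hzt, htz⟩ := ih (t := (t - c) / lam)
        (div_nonneg (by linarith) hpos.le) (by rw [div_lt_iff₀ hpos]; linarith)
      rw [le_div_iff₀ hpos] at hzt
      rw [div_lt_iff₀ hpos] at htz
      exact ⟨c + lam * z, ite_add_mul_mem_aprime_succ hz b, by linarith, by
        rw [pow_succ]; linarith⟩
    by_cases hlow : t < lam * S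
    · exact rescale false (by simpa using ht₀) (by simpa using hlow)
    by_cases hhigh : 1 ≤ t
    · exact rescale true (by simpa using hhigh) (by simp only [if_true]; linarith)
    · refine ⟨lam * S, mul_mem_aprime_succ (geom_sum_mem_aprime lam _), not_lt.mp hlow, ?_⟩
      -- `1 = (1 - λ) S + λ^(n+1) ≤ λ S + λ^(n+1)` because `λ ≥ 1/2`.
      have hS : S * (lam - 1) = lam ^ (n + 1) - 1 := geom_sum_mul lam (n + 1)
      have hS₀ : 0 ≤ S := aprime_nonneg hpos.le (geom_sum_mem_aprime lam _)
      nlinarith [mul_nonneg hS₀ (by linarith : (0 : ℝ) ≤ 2 * lam - 1)]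

end Aprime

/-- For every λ ∈ (1/2,1), the largest nearest-neighbor gap of `A'_N(λ)` equals `λ^(N-1)`:
every gap between consecutive elements is at most `λ^(N-1)`, and some pair of consecutive
elements realizes it. -/
theorem stmt_1 (lam : ℝ) (hlam : lam ∈ Set.Ioo (1/2 : ℝ) 1) (N : ℕ) (hN : 1 ≤ N) :
    (∀ x ∈ Aprime lam N, ∀ y ∈ Aprime lam N, x < y →
      (∀ z ∈ Aprime lam N, ¬(x < z ∧ z < y)) → y - x ≤ lam ^ (N - 1)) ∧
    (∃ x ∈ Aprime lam N, ∃ y ∈ Aprime lam N, x < y ∧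
      (∀ z ∈ Aprime lam N, ¬(x < z ∧ z < y)) ∧ y - x = lam ^ (N - 1)) := by
  obtain ⟨hhalf, hlt⟩ := hlam
  have hpos : 0 < lam := by linarith
  obtain ⟨n, rfl⟩ := Nat.exists_eq_add_of_le' hN
  rw [Nat.add_sub_cancel]
  refine ⟨fun x hx y hy _ hgap => ?_,
    0, zero_mem_aprime lam _, lam ^ n, pow_mem_aprime lam n, by positivity, ?_, sub_zero _⟩
  · by_contra! hbig
    obtain ⟨z, hz, hzt, htz⟩ := exists_mem_aprime_le_lt_add hhalf.le n (t := x + lam ^ n)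
      (by linarith [aprime_nonneg hpos.le hx, pow_pos hpos n])
      (by linarith [le_geom_sum_of_mem_aprime hpos.le hy])
    exact hgap z hz ⟨by linarith, by linarith⟩
  · rintro z hz ⟨hz₀, hzn⟩
    exact (pow_le_of_mem_aprime hpos.le hlt.le hz hz₀.ne').not_gt hzn
end

section
/- The set of zeros in (1/2, 1) of polynomials with constant coefficient 1 and all other coefficients in {−1, 0, 1} is dense in (1/2, 1). -/
/-!
Greedy expansion: for `1/2 ≤ λ ≤ 1` one picks `1 = n₁ < n₂ < ⋯ ≤ k` so that the remainder
`1 - ∑ λ^{nᵢ}` lies in `[0, λ^k]`; the bound survives each step because `λ^k ≤ 2 λ^{k+1}`.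
The polynomial `p(x) = 1 - ∑ x^{nᵢ}` then has `p(λ) ≥ 0`, and it decreases at least as fast as
`-x` on `[0, ∞)` because it contains the term `-x`, so `p(λ + λ^k) ≤ 0` and `p` has a root in
`[λ, λ + λ^k]`. Letting `k → ∞` gives roots arbitrarily close to `λ`.
-/

open Finset

theorem exists_greedy_expansion {l : ℝ} (hl : 1 / 2 ≤ l) (hl1 : l ≤ 1) {k : ℕ} (hk : 1 ≤ k) :
    ∃ S ⊆ Icc 1 k, 1 ∈ S ∧ 0 ≤ 1 - ∑ n ∈ S, l ^ n ∧ 1 - ∑ n ∈ S, l ^ n ≤ l ^ k := by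
  induction k, hk using Nat.le_induction with
  | base => exact ⟨{1}, by simp, by simp, by simpa, by rw [sum_singleton, pow_one]; linarith⟩
  | succ k _ ih =>
    obtain ⟨S, hSk, h1S, hr0, hrk⟩ := ih
    have hpow : l ^ k ≤ 2 * l ^ (k + 1) := by
      rw [pow_succ]; nlinarith [pow_nonneg (by linarith : (0 : ℝ) ≤ l) k]
    by_cases hstep : l ^ (k + 1) ≤ 1 - ∑ n ∈ S, l ^ n
    · have hk1 : k + 1 ∉ S := fun h => by simpa using (mem_Icc.mp (hSk h)).2
      refine ⟨insert (k + 1) S, ?_, mem_insert_of_mem h1S, ?_, ?_⟩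
      · exact insert_subset (by simp) (hSk.trans (Icc_subset_Icc_right k.le_succ))
      all_goals rw [sum_insert hk1]; linarith
    · exact ⟨S, hSk.trans (Icc_subset_Icc_right k.le_succ), h1S, hr0, by linarith⟩

theorem sub_le_sum_pow_sub_sum_pow {S : Finset ℕ} (h1S : 1 ∈ S) {x y : ℝ} (hx : 0 ≤ x)
    (hxy : x ≤ y) : y - x ≤ ∑ n ∈ S, y ^ n - ∑ n ∈ S, x ^ n := by
  rw [← sum_sub_distrib]
  simpa using single_le_sum (fun n _ => sub_nonneg.mpr (pow_le_pow_left₀ hx hxy n)) h1S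

theorem exists_root_one_sub_sum_pow {l : ℝ} (hl : 1 / 2 ≤ l) (hl1 : l ≤ 1) {k : ℕ}
    (hk : 1 ≤ k) : ∃ S ⊆ Icc 1 k, ∃ x ∈ Set.Icc l (l + l ^ k), 1 - ∑ n ∈ S, x ^ n = 0 := by
  obtain ⟨S, hSk, h1S, hr0, hrk⟩ := exists_greedy_expansion hl hl1 hk
  have hly : l ≤ l + l ^ k := le_add_of_nonneg_right (pow_nonneg (by linarith) k)
  have hdecr := sub_le_sum_pow_sub_sum_pow h1S (by linarith) hly
  have hcont : ContinuousOn (fun x : ℝ => 1 - ∑ n ∈ S, x ^ n) (Set.Icc l (l + l ^ k)) := by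
    fun_prop
  obtain ⟨x, hx, hroot⟩ := intermediate_value_Icc' hly hcont ⟨by linarith, hr0⟩
  exact ⟨S, hSk, x, hx, hroot⟩

theorem exists_signed_digits_eq_one_sub_sum_pow {S : Finset ℕ} {k : ℕ} (hSk : S ⊆ Icc 1 k)
    (x : ℝ) : ∃ c : ℕ → ℝ, (∀ n, c n ∈ ({-1, 0, 1} : Set ℝ)) ∧
      1 + ∑ n ∈ Icc 1 k, c n * x ^ n = 1 - ∑ n ∈ S, x ^ n := by
  refine ⟨fun n => if n ∈ S then -1 else 0, fun n => by dsimp only; split_ifs <;> simp, ?_⟩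
  simp only [ite_mul, neg_one_mul, zero_mul]
  rw [sum_ite_mem, inter_eq_right.mpr hSk, sum_neg_distrib, ← sub_eq_add_neg]

/-- The set of zeros in (1/2,1) of polynomials `1 + Σ_{n=1}^k c_n x^n` with
`c_n ∈ {-1,0,1}` is dense in (1/2,1). -/
theorem stmt_3 :
    Set.Ioo (1/2 : ℝ) 1 ⊆
      closure {x : ℝ | x ∈ Set.Ioo (1/2 : ℝ) 1 ∧
        ∃ k : ℕ, ∃ c : ℕ → ℝ, (∀ n, c n ∈ ({-1, 0, 1} : Set ℝ)) ∧
          1 + ∑ n ∈ Finset.Icc 1 k, c n * x ^ n = 0} := by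
  intro l ⟨hl, hl1⟩
  rw [Metric.mem_closure_iff]
  intro ε hε
  obtain ⟨k, hk⟩ := exists_pow_lt_of_lt_one (lt_min hε (sub_pos.mpr hl1)) hl1
  have hk' : l ^ (k + 1) < min ε (1 - l) :=
    (pow_le_pow_of_le_one (by linarith) hl1.le k.le_succ).trans_lt hk
  obtain ⟨S, hSk, x, ⟨hlx, hxl⟩, hroot⟩ :=
    exists_root_one_sub_sum_pow hl.le hl1.le (by omega : 1 ≤ k + 1)
  obtain ⟨c, hc, hcS⟩ := exists_signed_digits_eq_one_sub_sum_pow hSk x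
  refine ⟨x, ⟨⟨by linarith, ?_⟩, k + 1, c, hc, hcS.trans hroot⟩, ?_⟩
  · linarith [min_le_right ε (1 - l)]
  · rw [Real.dist_eq, abs_sub_comm, abs_of_nonneg (by linarith)]
    linarith [min_le_left ε (1 - l)]
end

section
/- Let I = [λ_0, λ_1] ⊂ (1/2, 1) be a closed interval such that every power series f(x) = 1 + Σ_{n≥1} c_n x^n with c_n ∈ {−1,0,1} satisfies: f(x) = 0 and x ∈ I imply f'(x) ≠ 0. Then there exists a constant C > 0, depending only on I, such that for every such power series g and every ρ > 0, the Lebesgue measure of { λ ∈ I : |g(λ)| ≤ ρ } is at most C·ρ. -/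
/-!
By compactness of `B × I` (product topology on the coefficients), transversality yields a
uniform `δ > 0` with `max (|g λ|, |g' λ|) ≥ δ` for all `g ∈ B`, `λ ∈ I`; moreover the `g'`
are uniformly Lipschitz on `I`, with constant `M = ∑ n (n - 1) λ₁ⁿ⁻²`. Cut `I` into pieces of
length `h ≈ δ / 2M`. If `ρ < δ` and `|g| ≤ ρ` somewhere on a piece, then `|g'| ≥ δ` there, so
`g'` stays within `δ / 2` of a value of modulus `≥ δ` on the whole piece, and the points of the
piece where `|g| ≤ ρ` lie within `4ρ / δ` of each other. Summing over the `⌈|I| / h⌉ + 1`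
pieces gives `Cρ`.
-/

open MeasureTheory Set
open scoped ENNReal

lemma volume_le_ofReal_of_abs_sub_le {s : Set ℝ} {d : ℝ}
    (h : ∀ x ∈ s, ∀ y ∈ s, |x - y| ≤ d) : volume s ≤ ENNReal.ofReal d :=
  (Real.volume_le_diam s).trans <| Metric.ediam_le fun x hx y hy => by
    rw [edist_dist, Real.dist_eq]
    exact ENNReal.ofReal_le_ofReal (h x hx y hy)

lemma volume_le_of_volume_inter_Icc_le {E : Set ℝ} {a b h : ℝ} (hE : E ⊆ Icc a b) (hh : 0 < h)
    {D : ℝ≥0∞} (hD : ∀ t, volume (E ∩ Icc t (t + h)) ≤ D) :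
    volume E ≤ ((⌈(b - a) / h⌉₊ + 1 : ℕ) : ℝ≥0∞) * D := by
  have hcover : E ⊆ ⋃ k ∈ Finset.range (⌈(b - a) / h⌉₊ + 1),
      E ∩ Icc (a + k * h) (a + k * h + h) := by
    intro x hx
    obtain ⟨hax, hxb⟩ := hE hx
    have hk := Nat.floor_le (div_nonneg (sub_nonneg.2 hax) hh.le)
    have hk' := Nat.lt_floor_add_one ((x - a) / h)
    have hkN : ⌊(x - a) / h⌋₊ ≤ ⌈(b - a) / h⌉₊ :=
      (Nat.floor_le_floor (by gcongr)).trans (Nat.floor_le_ceil _)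
    rw [le_div_iff₀ hh] at hk
    rw [div_lt_iff₀ hh] at hk'
    exact mem_biUnion (Finset.mem_range.2 (Nat.lt_succ_of_le hkN))
      ⟨hx, by linarith, by linarith⟩
  calc volume E ≤ ∑ k ∈ Finset.range (⌈(b - a) / h⌉₊ + 1),
        volume (E ∩ Icc (a + k * h) (a + k * h + h)) :=
        (measure_mono hcover).trans (measure_biUnion_finset_le _ _)
    _ ≤ ∑ k ∈ Finset.range (⌈(b - a) / h⌉₊ + 1), D := Finset.sum_le_sum fun k _ => hD _
    _ = _ := by simp

lemma Convex.mul_abs_sub_le_abs_sub_of_hasDerivWithinAt {f f' : ℝ → ℝ} {s : Set ℝ}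
    (hs : Convex ℝ s) (hf : ∀ x ∈ s, HasDerivWithinAt f (f' x) s x) {d ε : ℝ}
    (hε : ∀ x ∈ s, |f' x - d| ≤ ε) {x y : ℝ} (hx : x ∈ s) (hy : y ∈ s) :
    (|d| - ε) * |y - x| ≤ |f y - f x| := by
  have hg := hs.norm_image_sub_le_of_norm_hasDerivWithin_le
    (fun w hw => (hf w hw).sub ((hasDerivWithinAt_id w s).const_mul d)) (by simpa using hε)
    hx hy
  simp only [Real.norm_eq_abs, Pi.sub_apply, id] at hg
  have : |d| * |y - x| ≤ |f y - f x| + |f y - d * y - (f x - d * x)| := by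
    rw [← abs_mul, show d * (y - x) = (f y - f x) - (f y - d * y - (f x - d * x)) by ring]
    exact abs_sub _ _
  linarith

theorem exists_volume_sublevel_le (a b δ M : ℝ) (hδ : 0 < δ) (hM : 0 ≤ M) :
    ∃ C > 0, ∀ f f' : ℝ → ℝ, (∀ x ∈ Icc a b, HasDerivWithinAt f (f' x) (Icc a b) x) →
      (∀ x ∈ Icc a b, ∀ y ∈ Icc a b, |f' x - f' y| ≤ M * |x - y|) →
      (∀ x ∈ Icc a b, δ ≤ max |f x| |f' x|) →
      ∀ ρ > 0, volume {x | x ∈ Icc a b ∧ |f x| ≤ ρ} ≤ ENNReal.ofReal (C * ρ) := by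
  set h := δ / (2 * M + 1)
  have hh : 0 < h := by positivity
  have hMh : M * h ≤ δ / 2 := by
    rw [mul_div_assoc', div_le_div_iff₀ (by positivity) two_pos]
    nlinarith
  refine ⟨(⌈(b - a) / h⌉₊ + 1 : ℕ) * ((4 + h) / δ), by positivity,
    fun f f' hf hLip hδf ρ hρ => ?_⟩
  suffices hpiece : ∀ t, ∀ x ∈ {x | x ∈ Icc a b ∧ |f x| ≤ ρ} ∩ Icc t (t + h),
      ∀ y ∈ {x | x ∈ Icc a b ∧ |f x| ≤ ρ} ∩ Icc t (t + h), |x - y| * δ ≤ (4 + h) * ρ by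
    refine (volume_le_of_volume_inter_Icc_le (fun x hx => hx.1) hh fun t =>
      volume_le_ofReal_of_abs_sub_le (d := (4 + h) / δ * ρ) fun x hx y hy => ?_).trans_eq ?_
    · rw [div_mul_eq_mul_div, le_div_iff₀ hδ]
      exact hpiece t x hx y hy
    · rw [← ENNReal.ofReal_natCast, ← ENNReal.ofReal_mul (Nat.cast_nonneg _), mul_assoc]
  rintro t x ⟨⟨hxI, hfx⟩, hxt⟩ y ⟨⟨hyI, hfy⟩, hyt⟩
  have hxy : |x - y| ≤ h :=
    abs_sub_le_iff.2 ⟨by linarith [hxt.2, hyt.1], by linarith [hxt.1, hyt.2]⟩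
  rcases lt_or_ge ρ δ with hρδ | hδρ
  · -- `|f x| ≤ ρ < δ` forces `|f' x| ≥ δ`, and `f'` moves by at most `δ / 2` on the piece.
    have hf'x : δ ≤ |f' x| := (le_max_iff.1 (hδf x hxI)).resolve_left (by linarith)
    have hconv : Convex ℝ (Icc a b ∩ Icc t (t + h)) := (convex_Icc a b).inter (convex_Icc _ _)
    have hmv := hconv.mul_abs_sub_le_abs_sub_of_hasDerivWithinAt
      (fun w hw => (hf w hw.1).mono inter_subset_left) (d := f' x) (ε := δ / 2)
      (fun w hw => (hLip w hw.1 x hxI).trans <| (mul_le_mul_of_nonneg_left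
        (abs_sub_le_iff.2 ⟨by linarith [hw.2.2, hxt.1], by linarith [hw.2.1, hxt.2]⟩) hM).trans
        hMh)
      ⟨hxI, hxt⟩ ⟨hyI, hyt⟩
    have hfyx : |f y - f x| ≤ 2 * ρ := (abs_sub _ _).trans (by linarith)
    rw [abs_sub_comm] at hmv
    nlinarith [abs_nonneg (x - y)]
  · nlinarith [abs_nonneg (x - y)]

lemma summable_descFactorial_mul_pow_sub {r : ℝ} (hr : |r| < 1) (k : ℕ) :
    Summable fun n : ℕ => (n.descFactorial k : ℝ) * r ^ (n - k) := by
  rw [← summable_nat_add_iff k]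
  simpa using summable_descFactorial_mul_geometric_of_norm_lt_one k (r := r) (by simpa using hr)

lemma abs_mul_pow_le {c x r : ℝ} (hc : |c| ≤ 1) (hx : |x| ≤ r) (k : ℕ) :
    |c * x ^ k| ≤ r ^ k := by
  rw [abs_mul, abs_pow]
  exact (mul_le_of_le_one_left (by positivity) hc).trans (pow_le_pow_left₀ (abs_nonneg x) hx k)

noncomputable def powSum (c : ℕ → ℝ) (x : ℝ) : ℝ := ∑' n, c n * x ^ n

noncomputable def powSumDeriv (c : ℕ → ℝ) (x : ℝ) : ℝ := ∑' n, c n * (n * x ^ (n - 1))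

lemma abs_mul_nat_mul_pow_le {c x r : ℝ} (hc : |c| ≤ 1) (hx : |x| ≤ r) (n : ℕ) :
    |c * (n * x ^ (n - 1))| ≤ n * r ^ (n - 1) := by
  rw [mul_left_comm, abs_mul, Nat.abs_cast]
  exact mul_le_mul_of_nonneg_left (abs_mul_pow_le hc hx _) n.cast_nonneg

theorem hasDerivAt_powSum {c : ℕ → ℝ} (hc : ∀ n, |c n| ≤ 1) {x : ℝ} (hx : |x| < 1) :
    HasDerivAt (powSum c) (powSumDeriv c x) x := by
  obtain ⟨r, hxr, hr1⟩ := exists_between hx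
  have hr0 : 0 < r := (abs_nonneg x).trans_lt hxr
  have hr : |r| < 1 := by rwa [abs_of_pos hr0]
  refine hasDerivAt_tsum_of_isPreconnected (u := fun n : ℕ => (n : ℝ) * r ^ (n - 1))
    (by simpa using summable_descFactorial_mul_pow_sub hr 1) isOpen_Ioo isPreconnected_Ioo
    (fun n y _ => (hasDerivAt_pow n y).const_mul (c n))
    (fun n y hy => abs_mul_nat_mul_pow_le (hc n) (abs_le.2 ⟨hy.1.le, hy.2.le⟩) n)
    (y₀ := 0) (by simpa using hr0) ?_ (abs_lt.1 hxr)
  exact summable_of_ne_finset_zero (s := {0}) fun n hn => by simp_all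

theorem abs_powSumDeriv_sub_le {c : ℕ → ℝ} (hc : ∀ n, |c n| ≤ 1) {r : ℝ} (hr : |r| < 1)
    {x y : ℝ} (hx : |x| ≤ r) (hy : |y| ≤ r) :
    |powSumDeriv c x - powSumDeriv c y| ≤
      (∑' n : ℕ, (n.descFactorial 2 : ℝ) * r ^ (n - 2)) * |x - y| := by
  have hsum : ∀ z, |z| ≤ r → Summable fun n : ℕ => c n * (n * z ^ (n - 1)) := fun z hz =>
    .of_norm_bounded (by simpa using summable_descFactorial_mul_pow_sub hr 1)
      fun n => abs_mul_nat_mul_pow_le (hc n) hz n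
  have hterm : ∀ n : ℕ, ‖c n * (n * x ^ (n - 1)) - c n * (n * y ^ (n - 1))‖ ≤
      (n.descFactorial 2 : ℝ) * r ^ (n - 2) * |x - y| := fun n => by
    have hpow : |x ^ (n - 1) - y ^ (n - 1)| ≤ |x - y| * (n - 1 : ℕ) * r ^ (n - 2) :=
      (abs_pow_sub_pow_le x y (n - 1)).trans <| by
        rw [Nat.sub_sub]
        gcongr
        exact max_le hx hy
    rw [Real.norm_eq_abs, show c n * (n * x ^ (n - 1)) - c n * (n * y ^ (n - 1)) =
      n * (c n * (x ^ (n - 1) - y ^ (n - 1))) by ring, abs_mul, abs_mul, Nat.abs_cast]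
    calc (n : ℝ) * (|c n| * |x ^ (n - 1) - y ^ (n - 1)|)
        ≤ n * (1 * (|x - y| * (n - 1 : ℕ) * r ^ (n - 2))) := by
          gcongr
          exact hc n
      _ = _ := by simp [Nat.descFactorial_succ]; ring
  calc |powSumDeriv c x - powSumDeriv c y|
      = |∑' n : ℕ, (c n * (n * x ^ (n - 1)) - c n * (n * y ^ (n - 1)))| := by
        rw [(hsum x hx).tsum_sub (hsum y hy)]; rfl
    _ ≤ ∑' n : ℕ, (n.descFactorial 2 : ℝ) * r ^ (n - 2) * |x - y| :=
        tsum_of_norm_bounded ((summable_descFactorial_mul_pow_sub hr 2).mul_right _).hasSum hterm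
    _ = _ := tsum_mul_right

theorem continuousOn_powSum {r : ℝ} (hr : |r| < 1) :
    ContinuousOn (fun p : (ℕ → ℝ) × ℝ => powSum p.1 p.2)
      {p | (∀ n, |p.1 n| ≤ 1) ∧ |p.2| ≤ r} :=
  continuousOn_tsum (fun n => by fun_prop) (summable_geometric_of_abs_lt_one hr)
    fun n _ hp => abs_mul_pow_le (hp.1 n) hp.2 n

theorem continuousOn_powSumDeriv {r : ℝ} (hr : |r| < 1) :
    ContinuousOn (fun p : (ℕ → ℝ) × ℝ => powSumDeriv p.1 p.2)
      {p | (∀ n, |p.1 n| ≤ 1) ∧ |p.2| ≤ r} :=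
  continuousOn_tsum (fun n => by fun_prop)
    (by simpa using summable_descFactorial_mul_pow_sub hr 1)
    fun n _ hp => abs_mul_nat_mul_pow_le (hp.1 n) hp.2 n

theorem exists_pos_le_max_abs_powSum_powSumDeriv {K : Set (ℕ → ℝ)} (hK : IsCompact K)
    (hK1 : ∀ c ∈ K, ∀ n, |c n| ≤ 1) {s : Set ℝ} (hs : IsCompact s) {r : ℝ} (hr : |r| < 1)
    (hsr : ∀ x ∈ s, |x| ≤ r)
    (htrans : ∀ c ∈ K, ∀ x ∈ s, powSum c x = 0 → powSumDeriv c x ≠ 0) :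
    ∃ δ > 0, ∀ c ∈ K, ∀ x ∈ s, δ ≤ max |powSum c x| |powSumDeriv c x| := by
  have hsub : K ×ˢ s ⊆ {p | (∀ n, |p.1 n| ≤ 1) ∧ |p.2| ≤ r} :=
    fun p hp => ⟨hK1 _ hp.1, hsr _ hp.2⟩
  obtain ⟨δ, hδ, hδle⟩ := (hK.prod hs).exists_forall_le' (a := (0 : ℝ))
    (f := fun p => max |powSum p.1 p.2| |powSumDeriv p.1 p.2|)
    (((continuousOn_powSum hr).mono hsub).abs.sup ((continuousOn_powSumDeriv hr).mono hsub).abs)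
    fun p hp => by
      by_cases h : powSum p.1 p.2 = 0
      · exact lt_max_of_lt_right (abs_pos.2 (htrans _ hp.1 _ hp.2 h))
      · exact lt_max_of_lt_left (abs_pos.2 h)
  exact ⟨δ, hδ, fun c hc x hx => hδle (c, x) ⟨hc, hx⟩⟩

def classB : Set (ℕ → ℝ) := {c | c 0 = 1 ∧ ∀ n, c n ∈ ({-1, 0, 1} : Set ℝ)}

lemma isCompact_classB : IsCompact classB := by
  have : classB = (fun c : ℕ → ℝ => c 0) ⁻¹' {1} ∩ univ.pi fun _ => {-1, 0, 1} := by
    ext c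
    simp [classB]
  rw [this]
  exact (isCompact_univ_pi fun _ => (toFinite _).isCompact).inter_left
    (isClosed_singleton.preimage (continuous_apply 0))

lemma abs_le_one_of_mem_classB {c : ℕ → ℝ} (hc : c ∈ classB) (n : ℕ) : |c n| ≤ 1 := by
  have h := hc.2 n
  simp only [mem_insert_iff, mem_singleton_iff] at h
  rcases h with h | h | h <;> simp [h]

/-- If `[λ₀,λ₁] ⊂ (1/2,1)` is an interval of transversality for the class of power series
`f(x) = 1 + Σ_{n≥1} c_n x^n`, `c_n ∈ {-1,0,1}`, then there is `C > 0` (depending only on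
the interval) such that `Leb{λ ∈ I : |g(λ)| ≤ ρ} ≤ C·ρ` for every `g` in the class and `ρ > 0`. -/
theorem stmt_5 (lam0 lam1 : ℝ) (h0 : 1/2 < lam0) (h01 : lam0 ≤ lam1) (h1 : lam1 < 1)
    (htrans : ∀ c : ℕ → ℝ, c 0 = 1 → (∀ n, c n ∈ ({-1, 0, 1} : Set ℝ)) →
      ∀ x ∈ Set.Icc lam0 lam1, (∑' n : ℕ, c n * x ^ n) = 0 →
        deriv (fun y : ℝ => ∑' n : ℕ, c n * y ^ n) x ≠ 0) :
    ∃ C > 0, ∀ c : ℕ → ℝ, c 0 = 1 → (∀ n, c n ∈ ({-1, 0, 1} : Set ℝ)) →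
      ∀ ρ > 0,
        volume {lam : ℝ | lam ∈ Set.Icc lam0 lam1 ∧ |∑' n : ℕ, c n * lam ^ n| ≤ ρ}
          ≤ ENNReal.ofReal (C * ρ) := by
  have hlam1 : 0 ≤ lam1 := by linarith
  have hr : |lam1| < 1 := by rwa [abs_of_nonneg hlam1]
  have hI : ∀ x ∈ Icc lam0 lam1, |x| ≤ lam1 :=
    fun x hx => abs_le.2 ⟨by linarith [hx.1], hx.2⟩
  have hI1 : ∀ x ∈ Icc lam0 lam1, |x| < 1 := fun x hx => (hI x hx).trans_lt h1
  obtain ⟨δ, hδ, hδle⟩ := exists_pos_le_max_abs_powSum_powSumDeriv isCompact_classB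
    (fun _ hc => abs_le_one_of_mem_classB hc) isCompact_Icc hr hI fun c hc x hx hfx => by
      rw [← (hasDerivAt_powSum (abs_le_one_of_mem_classB hc) (hI1 x hx)).deriv]
      exact htrans c hc.1 hc.2 x hx hfx
  obtain ⟨C, hC, hCle⟩ := exists_volume_sublevel_le lam0 lam1 δ
    (∑' n : ℕ, (n.descFactorial 2 : ℝ) * lam1 ^ (n - 2)) hδ
    (tsum_nonneg fun n => mul_nonneg (Nat.cast_nonneg _) (pow_nonneg hlam1 _))
  refine ⟨C, hC, fun c hc0 hcm => ?_⟩
  have hc : ∀ n, |c n| ≤ 1 := abs_le_one_of_mem_classB ⟨hc0, hcm⟩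
  exact hCle (powSum c) (powSumDeriv c)
    (fun x hx => (hasDerivAt_powSum hc (hI1 x hx)).hasDerivWithinAt)
    (fun x hx y hy => abs_powSumDeriv_sub_le hc hr (hI x hx) (hI y hy))
    (hδle c ⟨hc0, hcm⟩)
end

section
/- Assume the interval I = [λ_0, λ_1] ⊂ (1/2, 1) has the sublevel-set property: there is C > 0 such that for every polynomial g(x) = 1 + Σ_{n=1}^{m} c_n x^n with c_n ∈ {−1,0,1} and every ρ > 0, Leb{λ ∈ I : |g(λ)| ≤ ρ} ≤ Cρ. Then for every N ≥ 1 and every s > 0, the integral over I of the pair correlation R'_2(s, λ, 2^N) is at most C·λ_0/(2λ_0 − 1) · s, where R'_2(s, λ, 2^N) = 2^{−N} · #{ (ω, τ) ∈ ({0,1}^N)^2 : ω ≠ τ, |Σ_{n=0}^{N-1}(ω_n − τ_n)λ^n| ≤ s·2^{−N} }. -/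
/-!
Write `π_λ(ω) - π_λ(τ) = ±λ^k g(λ)`, where `k` is the first index at which `ω` and `τ` differ and
`g` is a `{0, ±1}` polynomial with constant term `1`. Since `λ ≥ λ₀` on `I`, the sublevel bound
gives `Leb {λ ∈ I : |π_λ(ω) - π_λ(τ)| ≤ ρ} ≤ C ρ λ₀^{-k}`. At most `4^N / 2^(k+1)` ordered pairs
first differ at `k`, so the integral of the pair correlation is at most
`(C s / 2) Σ_k (2λ₀)^{-k} ≤ C λ₀ s / (2λ₀ - 1)`.
-/

open MeasureTheory

/-- `π_λ^N(ω) = Σ_{n=0}^{N-1} ω_n λ^n`. -/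
noncomputable def piN (lam : ℝ) (N : ℕ) (ω : Fin N → Bool) : ℝ :=
  ∑ n : Fin N, if ω n then lam ^ (n : ℕ) else 0

/-- Pair correlation for `A'_N(λ)`:
`R'_2(s, λ, 2^N) = 2^{-N} · #{(ω,τ) : ω ≠ τ, |π_λ^N(ω) - π_λ^N(τ)| ≤ s·2^{-N}}`. -/
noncomputable def R2' (s lam : ℝ) (N : ℕ) : ℝ :=
  ((Finset.univ.filter (fun p : (Fin N → Bool) × (Fin N → Bool) =>
      p.1 ≠ p.2 ∧ |piN lam N p.1 - piN lam N p.2| ≤ s / 2 ^ N)).card : ℝ) / 2 ^ N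

open Finset

def HasSublevelBound (I : Set ℝ) (C : ℝ) : Prop :=
  ∀ (m : ℕ) (c : ℕ → ℝ), c 0 = 1 → (∀ n, c n ∈ ({-1, 0, 1} : Set ℝ)) → ∀ ρ > 0,
    volume {lam : ℝ | lam ∈ I ∧ |∑ n ∈ range (m + 1), c n * lam ^ n| ≤ ρ}
      ≤ ENNReal.ofReal (C * ρ)

lemma abs_eq_one_of_mem_signedDigits {a : ℝ} (ha : a ∈ ({-1, 0, 1} : Set ℝ)) (h0 : a ≠ 0) :
    |a| = 1 := by
  rcases ha with rfl | rfl | rfl <;> simp_all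

lemma mul_mem_signedDigits {a b : ℝ} (ha : a ∈ ({-1, 0, 1} : Set ℝ))
    (hb : b ∈ ({-1, 0, 1} : Set ℝ)) : a * b ∈ ({-1, 0, 1} : Set ℝ) := by
  rcases ha with rfl | rfl | rfl <;> rcases hb with rfl | rfl | rfl <;> norm_num

lemma sum_range_add_eq_pow_mul_sum {R : Type*} [CommSemiring R] {d : ℕ → R} {k : ℕ}
    (hd : ∀ n < k, d n = 0) (m : ℕ) (x : R) :
    ∑ n ∈ range (k + m), d n * x ^ n = x ^ k * ∑ n ∈ range m, d (k + n) * x ^ n := by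
  rw [sum_range_add, sum_eq_zero fun n hn => by rw [hd n (mem_range.1 hn), zero_mul], zero_add,
    mul_sum]
  exact sum_congr rfl fun n _ => by ring

theorem HasSublevelBound.volume_le_of_eq_zero_of_lt {I : Set ℝ} {C a : ℝ}
    (h : HasSublevelBound I C) (ha : 0 < a) (haI : ∀ x ∈ I, a ≤ x) {d : ℕ → ℝ}
    (hd : ∀ n, d n ∈ ({-1, 0, 1} : Set ℝ)) {k M : ℕ} (hzero : ∀ n < k, d n = 0) (hdk : d k ≠ 0)
    (hkM : k < M) {ρ : ℝ} (hρ : 0 < ρ) :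
    volume {lam | lam ∈ I ∧ |∑ n ∈ range M, d n * lam ^ n| ≤ ρ}
      ≤ ENNReal.ofReal (C * (ρ * a⁻¹ ^ k)) := by
  obtain ⟨m, rfl⟩ := Nat.exists_eq_add_of_lt hkM
  have hdk_abs : |d k| = 1 := abs_eq_one_of_mem_signedDigits (hd k) hdk
  have hc0 : d k * d (k + 0) = 1 := by rw [add_zero, ← abs_mul_abs_self, hdk_abs, one_mul]
  refine (measure_mono ?_).trans (h m (fun n => d k * d (k + n)) hc0
    (fun n => mul_mem_signedDigits (hd k) (hd _)) _ (by positivity))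
  rintro lam ⟨hlam, hle⟩
  have hlam_pos : 0 < lam := ha.trans_le (haI lam hlam)
  have hfactor : |∑ n ∈ range (k + m + 1), d n * lam ^ n|
      = lam ^ k * |∑ n ∈ range (m + 1), d k * d (k + n) * lam ^ n| := by
    simp_rw [add_assoc k m 1, sum_range_add_eq_pow_mul_sum hzero, mul_assoc, ← mul_sum, abs_mul,
      hdk_abs, one_mul, abs_pow, abs_of_pos hlam_pos]
  refine ⟨hlam, ?_⟩
  calc _ ≤ ρ / lam ^ k := by rw [le_div_iff₀' (by positivity), ← hfactor]; exact hle
    _ = ρ * lam⁻¹ ^ k := by rw [inv_pow, div_eq_mul_inv]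
    _ ≤ ρ * a⁻¹ ^ k := by gcongr; exact haI lam hlam

section BinaryWords

variable {N : ℕ}

noncomputable def digit (ω : Fin N → Bool) (n : ℕ) : ℝ :=
  if h : n < N then (if ω ⟨n, h⟩ then 1 else 0) else 0

lemma piN_sub_piN (lam : ℝ) (ω τ : Fin N → Bool) :
    piN lam N ω - piN lam N τ = ∑ n ∈ range N, (digit ω n - digit τ n) * lam ^ n := by
  rw [piN, piN, ← sum_sub_distrib,
    ← Fin.sum_univ_eq_sum_range (fun n => (digit ω n - digit τ n) * lam ^ n)]
  refine sum_congr rfl fun i _ => ?_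
  simp only [digit, dif_pos i.isLt]
  split_ifs <;> ring

lemma continuous_piN (ω : Fin N → Bool) : Continuous fun lam => piN lam N ω :=
  continuous_finsetSum _ fun i _ => by split_ifs <;> fun_prop

lemma digit_sub_digit_mem (ω τ : Fin N → Bool) (n : ℕ) :
    digit ω n - digit τ n ∈ ({-1, 0, 1} : Set ℝ) := by
  unfold digit
  split_ifs <;> norm_num

lemma digit_eq_digit_iff (ω τ : Fin N → Bool) (i : Fin N) :
    digit ω i = digit τ i ↔ ω i = τ i := by
  simp only [digit, dif_pos i.isLt]
  cases ω i <;> cases τ i <;> simp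

noncomputable def firstDiff (ω τ : Fin N → Bool) : ℕ :=
  sInf {n | digit ω n ≠ digit τ n}

variable {ω τ : Fin N → Bool}

lemma digit_firstDiff_ne (h : ω ≠ τ) :
    digit ω (firstDiff ω τ) ≠ digit τ (firstDiff ω τ) := by
  obtain ⟨i, hi⟩ := Function.ne_iff.1 h
  exact Nat.sInf_mem (s := {n | digit ω n ≠ digit τ n}) ⟨i, mt (digit_eq_digit_iff ω τ i).1 hi⟩

lemma digit_eq_of_lt_firstDiff {n : ℕ} (hn : n < firstDiff ω τ) : digit ω n = digit τ n :=
  not_not.1 (Nat.notMem_of_lt_sInf hn)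

lemma firstDiff_lt (h : ω ≠ τ) : firstDiff ω τ < N := by
  by_contra hN
  exact digit_firstDiff_ne h (by simp only [digit, dif_neg hN])

theorem HasSublevelBound.volume_piN_sub_le {I : Set ℝ} {C a : ℝ} (h : HasSublevelBound I C)
    (ha : 0 < a) (haI : ∀ x ∈ I, a ≤ x) (hωτ : ω ≠ τ) {ρ : ℝ} (hρ : 0 < ρ) :
    volume {lam | lam ∈ I ∧ |piN lam N ω - piN lam N τ| ≤ ρ}
      ≤ ENNReal.ofReal (C * (ρ * a⁻¹ ^ firstDiff ω τ)) := by
  simp_rw [piN_sub_piN]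
  exact h.volume_le_of_eq_zero_of_lt ha haI (digit_sub_digit_mem ω τ)
    (fun n hn => sub_eq_zero.2 (digit_eq_of_lt_firstDiff hn))
    (sub_ne_zero.2 (digit_firstDiff_ne hωτ)) (firstDiff_lt hωτ) hρ

def firstDiffPattern (k j : ℕ) : Finset (Bool × Bool) :=
  if j < k then univ.filter fun b => b.1 = b.2
  else if j = k then univ.filter fun b => b.1 ≠ b.2 else univ

lemma card_firstDiffPattern (k j : ℕ) : #(firstDiffPattern k j) = if j ≤ k then 2 else 4 := by
  unfold firstDiffPattern
  split_ifs <;> first | omega | rfl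

lemma prod_card_firstDiffPattern (k m : ℕ) :
    ∏ j ∈ range (k + m + 1), #(firstDiffPattern k j) = 2 ^ (k + 1) * 4 ^ m := by
  rw [add_assoc, prod_range_add, prod_range_succ',
    prod_congr rfl fun j hj => (card_firstDiffPattern k j).trans (if_pos (mem_range.1 hj).le),
    prod_congr rfl fun j _ => (card_firstDiffPattern k _).trans (if_neg (by omega)),
    card_firstDiffPattern, if_pos (by omega), prod_const, prod_const, card_range, card_range]
  ring

lemma card_offDiag_filter_firstDiff_eq_mul_le {k : ℕ} (hk : k < N) :
    #{p ∈ (univ : Finset (Fin N → Bool)).offDiag | firstDiff p.1 p.2 = k} * 2 ^ (k + 1)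
      ≤ 4 ^ N := by
  obtain ⟨m, rfl⟩ := Nat.exists_eq_add_of_lt hk
  calc _ ≤ #(Fintype.piFinset fun j : Fin (k + m + 1) => firstDiffPattern k j) * 2 ^ (k + 1) := by
        gcongr
        refine card_le_card_of_injOn (fun p j => (p.1 j, p.2 j)) ?_ ?_
        · intro p hp
          simp only [coe_filter, mem_offDiag] at hp
          obtain ⟨⟨-, -, hne⟩, hfirst⟩ := hp
          rw [mem_coe, Fintype.mem_piFinset]
          intro j
          simp only [firstDiffPattern, ← hfirst]
          split_ifs with hlt heq
          · simpa using (digit_eq_digit_iff p.1 p.2 j).1 (digit_eq_of_lt_firstDiff hlt)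
          · simpa [← digit_eq_digit_iff, heq] using digit_firstDiff_ne hne
          · exact mem_univ _
        · intro p _ q _ hpq
          simp only [funext_iff, Prod.mk.injEq] at hpq
          exact Prod.ext (funext fun j => (hpq j).1) (funext fun j => (hpq j).2)
    _ = 4 ^ (k + m + 1) := by
        rw [Fintype.card_piFinset, Fin.prod_univ_eq_prod_range (fun j => #(firstDiffPattern k j)),
          prod_card_firstDiffPattern, show (4 : ℕ) = 2 ^ 2 by norm_num, ← pow_mul, ← pow_mul,
          ← pow_add, ← pow_add]
        ring_nf

lemma sum_offDiag_pow_firstDiff_le {x : ℝ} (hx : 0 ≤ x) :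
    ∑ p ∈ (univ : Finset (Fin N → Bool)).offDiag, x ^ firstDiff p.1 p.2
      ≤ 4 ^ N / 2 * ∑ k ∈ range N, (x / 2) ^ k := by
  rw [← sum_fiberwise_of_maps_to (g := fun p => firstDiff p.1 p.2) (t := range N)
    fun p hp => mem_range.2 (firstDiff_lt (mem_offDiag.1 hp).2.2), mul_sum]
  refine sum_le_sum fun k hk => ?_
  rw [sum_congr rfl fun p hp => by rw [(mem_filter.1 hp).2], sum_const, nsmul_eq_mul]
  have hcard : (#{p ∈ (univ : Finset (Fin N → Bool)).offDiag | firstDiff p.1 p.2 = k} : ℝ)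
      ≤ 4 ^ N / 2 ^ (k + 1) := by
    rw [le_div_iff₀ (by positivity)]
    exact_mod_cast card_offDiag_filter_firstDiff_eq_mul_le (mem_range.1 hk)
  calc _ ≤ 4 ^ N / 2 ^ (k + 1) * x ^ k := by gcongr
    _ = _ := by rw [div_pow, pow_succ]; field_simp

lemma R2'_eq_sum_indicator (s lam : ℝ) :
    R2' s lam N = (∑ p ∈ (univ : Finset (Fin N → Bool)).offDiag,
      {x | |piN x N p.1 - piN x N p.2| ≤ s / 2 ^ N}.indicator 1 lam) / 2 ^ N := by
  have hoff : (univ : Finset (Fin N → Bool)).offDiag = univ.filter fun p => p.1 ≠ p.2 := by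
    ext; simp
  rw [R2', card_filter, Nat.cast_sum, hoff, sum_filter]
  congr 1
  refine sum_congr rfl fun p _ => ?_
  by_cases hp : p.1 = p.2 <;> simp [hp, Set.indicator_apply]

lemma measurableSet_abs_piN_sub_le (ω τ : Fin N → Bool) (r : ℝ) :
    MeasurableSet {x | |piN x N ω - piN x N τ| ≤ r} :=
  measurableSet_le ((continuous_piN ω).sub (continuous_piN τ)).abs.measurable measurable_const

lemma integral_R2'_eq_sum_measureReal {a b : ℝ} (hab : a ≤ b) (s : ℝ) :
    ∫ lam in a..b, R2' s lam N = (∑ p ∈ (univ : Finset (Fin N → Bool)).offDiag,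
      volume.real ({x | |piN x N p.1 - piN x N p.2| ≤ s / 2 ^ N} ∩ Set.Ioc a b)) / 2 ^ N := by
  have hA (p : (Fin N → Bool) × (Fin N → Bool)) := measurableSet_abs_piN_sub_le p.1 p.2 (s / 2 ^ N)
  simp_rw [R2'_eq_sum_indicator]
  rw [intervalIntegral.integral_div, intervalIntegral.integral_finsetSum]
  · congr 1
    refine sum_congr rfl fun p _ => ?_
    rw [intervalIntegral.integral_of_le hab, integral_indicator_one (hA p),
      measureReal_restrict_apply (hA p)]
  · exact fun p _ =>
      intervalIntegrable_iff.2 ((integrableOn_const measure_Ioc_lt_top.ne).indicator (hA p))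

end BinaryWords

theorem stmt_6_general (lam0 lam1 : ℝ) (h0 : 1/2 < lam0) (h01 : lam0 ≤ lam1)
    (C : ℝ) (hC : 0 < C)
    (hsub : ∀ (m : ℕ) (c : ℕ → ℝ), c 0 = 1 → (∀ n, c n ∈ ({-1, 0, 1} : Set ℝ)) →
      ∀ ρ > 0,
        volume {lam : ℝ | lam ∈ Set.Icc lam0 lam1 ∧
            |∑ n ∈ Finset.range (m + 1), c n * lam ^ n| ≤ ρ}
          ≤ ENNReal.ofReal (C * ρ)) :
    ∀ N : ℕ, 1 ≤ N → ∀ s : ℝ, 0 < s →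
      (∫ lam in lam0..lam1, R2' s lam N) ≤ C * lam0 / (2 * lam0 - 1) * s := by
  intro N _ s hs
  have hlam0 : 0 < lam0 := by linarith
  have hpair : ∀ p ∈ (univ : Finset (Fin N → Bool)).offDiag,
      volume.real ({x | |piN x N p.1 - piN x N p.2| ≤ s / 2 ^ N} ∩ Set.Ioc lam0 lam1)
        ≤ C * (s / 2 ^ N * lam0⁻¹ ^ firstDiff p.1 p.2) := by
    intro p hp
    refine ENNReal.toReal_le_of_le_ofReal (by positivity) ((measure_mono ?_).trans
      (HasSublevelBound.volume_piN_sub_le hsub hlam0 (fun x hx => hx.1) (mem_offDiag.1 hp).2.2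
        (by positivity)))
    exact fun x ⟨hxA, hxI⟩ => ⟨Set.Ioc_subset_Icc_self hxI, hxA⟩
  have hgeom : ∑ k ∈ range N, (lam0⁻¹ / 2) ^ k ≤ (1 - lam0⁻¹ / 2)⁻¹ := by
    simpa using geom_sum_Ico_le_of_lt_one (m := 0) (n := N) (by positivity)
      (show lam0⁻¹ / 2 < 1 by rw [div_lt_one two_pos, inv_lt_comm₀ hlam0 two_pos]; linarith)
  calc ∫ lam in lam0..lam1, R2' s lam N
      ≤ (∑ p ∈ (univ : Finset (Fin N → Bool)).offDiag,
          C * (s / 2 ^ N * lam0⁻¹ ^ firstDiff p.1 p.2)) / 2 ^ N := by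
        rw [integral_R2'_eq_sum_measureReal h01]
        gcongr with p hp
        exact hpair p hp
    _ = C * s / 4 ^ N * ∑ p ∈ (univ : Finset (Fin N → Bool)).offDiag,
          lam0⁻¹ ^ firstDiff p.1 p.2 := by
        rw [← mul_sum, ← mul_sum, show (4 : ℝ) ^ N = 2 ^ N * 2 ^ N by rw [← mul_pow]; norm_num]
        ring
    _ ≤ C * s / 4 ^ N * (4 ^ N / 2 * (1 - lam0⁻¹ / 2)⁻¹) := by
        gcongr
        exact (sum_offDiag_pow_firstDiff_le (by positivity)).trans (by gcongr)
    _ = C * lam0 / (2 * lam0 - 1) * s := by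
        field_simp

/-- Under the transversality sublevel-set bound on `I = [λ₀,λ₁] ⊂ (1/2,1)`, the averaged
pair correlation satisfies `∫_I R'_2(s,λ,2^N) dλ ≤ C·λ₀/(2λ₀-1) · s` for all `N ≥ 1`, `s > 0`. -/
theorem stmt_6 (lam0 lam1 : ℝ) (h0 : 1/2 < lam0) (h01 : lam0 ≤ lam1) (h1 : lam1 < 1)
    (C : ℝ) (hC : 0 < C)
    (hsub : ∀ (m : ℕ) (c : ℕ → ℝ), c 0 = 1 → (∀ n, c n ∈ ({-1, 0, 1} : Set ℝ)) →
      ∀ ρ > 0,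
        volume {lam : ℝ | lam ∈ Set.Icc lam0 lam1 ∧
            |∑ n ∈ Finset.range (m + 1), c n * lam ^ n| ≤ ρ}
          ≤ ENNReal.ofReal (C * ρ)) :
    ∀ N : ℕ, 1 ≤ N → ∀ s : ℝ, 0 < s →
      (∫ lam in lam0..lam1, R2' s lam N) ≤ C * lam0 / (2 * lam0 - 1) * s :=
  stmt_6_general lam0 lam1 h0 h01 C hC hsub
end

section
/- Suppose λ_0 ∈ (1/2, 1) is a zero of a polynomial 1 + Σ_{n=1}^k c_n x^n with c_n ∈ {−1, 0, 1}. Then there exist ρ < 2 and a constant C_2 > 0 such that the number of distinct values of Σ_{n=0}^{N-1} a_n λ_0^n over a_n ∈ {0,1} is at most C_2 · ρ^N for all N. -/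
/-!
Replacing the leading `1` of the relation `1 + Σ c_n λ₀^n = 0` by `0` and splitting
`c_n = u_n - v_n` gives two distinct `{0,1}`-words of length `K = k + 1` with the same value,
so `M := |A'_K(λ₀)| < 2^K`. Cutting a word of length `n + K` into a prefix of length `n` and a
suffix of length `K` shows `|A'_{n+K}| ≤ M · |A'_n|`, hence `|A'_N| ≤ 2^K · ρ^N` with
`ρ = M^{1/K} < 2`.
-/

/-- The finite set `A'_N(λ)` of values `Σ_{n=0}^{N-1} a_n λ^n`, `a_n ∈ {0,1}`,
counted without multiplicity. -/
noncomputable def AprimeF (lam : ℝ) (N : ℕ) : Finset ℝ :=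
  (Finset.univ : Finset (Fin N → Bool)).image
    (fun a => ∑ n : Fin N, if a n then lam ^ (n : ℕ) else 0)

open Finset

noncomputable def digitValue (lam : ℝ) {N : ℕ} (a : Fin N → Bool) : ℝ :=
  ∑ n : Fin N, if a n then lam ^ (n : ℕ) else 0

theorem AprimeF_eq_image_digitValue (lam : ℝ) (N : ℕ) :
    AprimeF lam N = (univ : Finset (Fin N → Bool)).image (digitValue lam) := rfl

theorem digitValue_mem_AprimeF (lam : ℝ) {N : ℕ} (a : Fin N → Bool) :
    digitValue lam a ∈ AprimeF lam N :=
  mem_image_of_mem _ (mem_univ a)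

theorem card_AprimeF_le_two_pow (lam : ℝ) (N : ℕ) : #(AprimeF lam N) ≤ 2 ^ N :=
  card_image_le.trans (by simp)

theorem card_AprimeF_pos (lam : ℝ) (N : ℕ) : 0 < #(AprimeF lam N) :=
  card_pos.mpr ⟨_, digitValue_mem_AprimeF lam (fun _ => false)⟩

theorem card_AprimeF_lt_two_pow {lam : ℝ} {N : ℕ} {a b : Fin N → Bool} (hab : a ≠ b)
    (hval : digitValue lam a = digitValue lam b) : #(AprimeF lam N) < 2 ^ N := by
  refine (card_AprimeF_le_two_pow lam N).lt_of_ne fun hcard => hab ?_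
  rw [AprimeF_eq_image_digitValue] at hcard
  exact card_image_iff.mp (hcard.trans (by simp)) (mem_univ a) (mem_univ b) hval

theorem digitValue_append (lam : ℝ) {m n : ℕ} (a : Fin (m + n) → Bool) :
    digitValue lam a = digitValue lam (fun i => a (Fin.castAdd n i)) +
      lam ^ m * digitValue lam (fun i => a (Fin.natAdd m i)) := by
  simp only [digitValue, Fin.sum_univ_add, mul_sum, mul_ite, mul_zero, Fin.val_castAdd,
    Fin.val_natAdd, pow_add]

theorem AprimeF_add_subset (lam : ℝ) (m n : ℕ) :
    AprimeF lam (m + n) ⊆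
      image₂ (fun x y => x + lam ^ m * y) (AprimeF lam m) (AprimeF lam n) := by
  intro x hx
  rw [AprimeF_eq_image_digitValue] at hx
  obtain ⟨a, -, rfl⟩ := mem_image.mp hx
  rw [digitValue_append]
  exact mem_image₂_of_mem (digitValue_mem_AprimeF _ _) (digitValue_mem_AprimeF _ _)

theorem card_AprimeF_add_le (lam : ℝ) (m n : ℕ) :
    #(AprimeF lam (m + n)) ≤ #(AprimeF lam m) * #(AprimeF lam n) :=
  (card_le_card (AprimeF_add_subset lam m n)).trans (card_image₂_le _ _ _)

theorem exists_ne_digitValue_eq_of_eval_eq_zero {lam : ℝ} {k : ℕ} {c : ℕ → ℝ}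
    (hc : ∀ n, c n ∈ ({-1, 0, 1} : Set ℝ))
    (hzero : 1 + ∑ n ∈ Icc 1 k, c n * lam ^ n = 0) :
    ∃ a b : Fin (k + 1) → Bool, a ≠ b ∧ digitValue lam a = digitValue lam b := by
  refine ⟨Fin.cons true fun i => c (i + 1) = 1, Fin.cons false fun i => c (i + 1) = -1,
    fun h => by simpa using congrFun h 0, ?_⟩
  have hIcc :
      ∑ n ∈ Icc 1 k, c n * lam ^ n = ∑ i : Fin k, c (i + 1) * lam ^ ((i : ℕ) + 1) := by
    rw [← Ico_add_one_right_eq_Icc, sum_Ico_eq_sum_range,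
      Fin.sum_univ_eq_sum_range (fun i => c (i + 1) * lam ^ (i + 1))]
    simp only [Nat.add_sub_cancel, add_comm]
  have hdigit : ∀ n, c n * lam ^ n =
      (if c n = 1 then lam ^ n else 0) - (if c n = -1 then lam ^ n else 0) := by
    intro n
    obtain h | h | h : c n = -1 ∨ c n = 0 ∨ c n = 1 := by simpa using hc n
    all_goals norm_num [h]
  rw [hIcc] at hzero
  simp only [hdigit, sum_sub_distrib] at hzero
  simp only [digitValue, Fin.sum_univ_succ, Fin.cons_zero, Fin.cons_succ, Fin.val_succ,
    Fin.val_zero, decide_eq_true_eq, if_true, Bool.false_eq_true, if_false, pow_zero]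
  linarith

theorem le_mul_pow_of_le_pow_mul_add {s : ℕ → ℝ} {K : ℕ} {B ρ : ℝ} (hK : 0 < K)
    (hB : 0 ≤ B) (hρ : 1 ≤ ρ) (hsmall : ∀ n < K, s n ≤ B)
    (hstep : ∀ n, s (n + K) ≤ ρ ^ K * s n) (N : ℕ) : s N ≤ B * ρ ^ N := by
  induction N using Nat.strong_induction_on with
  | _ N ih =>
    rcases lt_or_ge N K with hN | hN
    · exact (hsmall N hN).trans (le_mul_of_one_le_right hB (one_le_pow₀ hρ))
    · obtain ⟨n, rfl⟩ := Nat.exists_eq_add_of_le' hN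
      calc s (n + K) ≤ ρ ^ K * s n := hstep n
        _ ≤ ρ ^ K * (B * ρ ^ n) := by gcongr; exact ih n (by omega)
        _ = B * ρ ^ (n + K) := by ring

theorem stmt_9_general (lam0 : ℝ)
    (k : ℕ) (c : ℕ → ℝ) (hc : ∀ n, c n ∈ ({-1, 0, 1} : Set ℝ))
    (hzero : 1 + ∑ n ∈ Finset.Icc 1 k, c n * lam0 ^ n = 0) :
    ∃ ρ : ℝ, ρ < 2 ∧ ∃ C2 : ℝ, 0 < C2 ∧
      ∀ N : ℕ, ((AprimeF lam0 N).card : ℝ) ≤ C2 * ρ ^ N := by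
  obtain ⟨a, b, hab, hval⟩ := exists_ne_digitValue_eq_of_eval_eq_zero hc hzero
  set M := #(AprimeF lam0 (k + 1))
  have hM : 1 ≤ M := card_AprimeF_pos lam0 (k + 1)
  have hM2 : M < 2 ^ (k + 1) := card_AprimeF_lt_two_pow hab hval
  set ρ := (M : ℝ) ^ ((k + 1 : ℕ) : ℝ)⁻¹
  have hρK : ρ ^ (k + 1) = M := Real.rpow_inv_natCast_pow M.cast_nonneg k.succ_ne_zero
  have hρ2 : ρ < 2 :=
    lt_of_pow_lt_pow_left₀ (k + 1) zero_le_two (by rw [hρK]; exact_mod_cast hM2)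
  refine ⟨ρ, hρ2, 2 ^ (k + 1), by positivity,
    le_mul_pow_of_le_pow_mul_add k.succ_pos (by positivity)
      (Real.one_le_rpow (by exact_mod_cast hM) (by positivity))
      (fun n hn => ?_) (fun n => ?_)⟩
  · calc (#(AprimeF lam0 n) : ℝ) ≤ 2 ^ n := by exact_mod_cast card_AprimeF_le_two_pow lam0 n
      _ ≤ 2 ^ (k + 1) := pow_le_pow_right₀ one_le_two hn.le
  · rw [hρK, mul_comm]
    exact_mod_cast card_AprimeF_add_le lam0 n (k + 1)

/-- If `λ₀ ∈ (1/2,1)` is a zero of a polynomial `1 + Σ_{n=1}^k c_n x^n` with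
`c_n ∈ {-1,0,1}`, then the number of distinct values of `A'_N(λ₀)` is at most `C₂·ρ^N`
for some `ρ < 2` and `C₂ > 0`. -/
theorem stmt_9 (lam0 : ℝ) (hlam0 : lam0 ∈ Set.Ioo (1/2 : ℝ) 1)
    (k : ℕ) (hk : 1 ≤ k) (c : ℕ → ℝ) (hc : ∀ n, c n ∈ ({-1, 0, 1} : Set ℝ))
    (hzero : 1 + ∑ n ∈ Finset.Icc 1 k, c n * lam0 ^ n = 0) :
    ∃ ρ : ℝ, ρ < 2 ∧ ∃ C2 : ℝ, 0 < C2 ∧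
      ∀ N : ℕ, ((AprimeF lam0 N).card : ℝ) ≤ C2 * ρ ^ N :=
  stmt_9_general lam0 k c hc hzero
end

section
/- For λ ∈ (1/2, (√5−1)/2) and odd N, the two points x = Σ_{j=0}^{(N−3)/2} λ^{2j} and y = x + λ^{N−1} are consecutive elements of A'_N(λ), i.e., no element of A'_N(λ) lies strictly between x and y; in particular the largest gap λ^{N−1} is attained away from the endpoints. -/
/-!
Write `x_m = 1 + λ² + ⋯ + λ^{2m-2}` and `y_m = x_m + λ^{2m}`, so that `x_{m+1} = 1 + λ² x_m`
and `y_{m+1} = 1 + λ² y_m`. Splitting off the lowest digits, every element of `A'_{2m+3}(λ)` is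
`λ w` with `w ∈ A'_{2m+2}(λ)`, or `1 + λ² w` with `w ∈ A'_{2m+1}(λ)`, or at least `1 + λ`.
The first kind is at most `λ(1 + λ) x_{m+1} ≤ x_{m+1}`, the third at least `y_{m+1}` since
`y_m ≤ 1 + λ`; both bounds use `λ + λ² ≤ 1`. For the second kind the gap `(x_m, y_m)` is
scaled to `(x_{m+1}, y_{m+1})`, so induction on `m` shows that no element lies in between.
-/

open Finset

namespace Aprime

variable {lam z : ℝ} {n m : ℕ}

theorem zero_eq : Aprime lam 0 = {0} := by
  ext z
  simp [Aprime]

theorem mem_succ_iff :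
    z ∈ Aprime lam (n + 1) ↔
      ∃ b : Bool, ∃ w ∈ Aprime lam n, z = (if b then 1 else 0) + lam * w := by
  constructor
  · rintro ⟨a, rfl⟩
    refine ⟨a 0, _, ⟨fun i => a i.succ, rfl⟩, ?_⟩
    simp only [Fin.sum_univ_succ, mul_sum, mul_ite, mul_zero, Fin.val_zero, pow_zero,
      Fin.val_succ, pow_succ']
  · rintro ⟨b, w, ⟨a, rfl⟩, rfl⟩
    refine ⟨Fin.cons b a, ?_⟩
    simp only [Fin.sum_univ_succ, mul_sum, mul_ite, mul_zero, Fin.cons_zero, Fin.cons_succ,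
      Fin.val_zero, pow_zero, Fin.val_succ, pow_succ']

theorem one_add_sq_mul_mem (hw : z ∈ Aprime lam n) : 1 + lam ^ 2 * z ∈ Aprime lam (n + 2) :=
  mem_succ_iff.2 ⟨true, _, mem_succ_iff.2 ⟨false, z, hw, rfl⟩, by simp; ring⟩

theorem nonneg (h0 : 0 ≤ lam) (hz : z ∈ Aprime lam n) : 0 ≤ z := by
  obtain ⟨a, rfl⟩ := hz
  exact sum_nonneg fun i _ => by split_ifs <;> positivity

end Aprime

def evenPowSum (lam : ℝ) (m : ℕ) : ℝ :=
  ∑ j ∈ range m, lam ^ (2 * j)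

namespace evenPowSum

variable {lam : ℝ} {m : ℕ}

@[simp]
theorem zero : evenPowSum lam 0 = 0 := rfl

theorem succ : evenPowSum lam (m + 1) = 1 + lam ^ 2 * evenPowSum lam m := by
  simp only [evenPowSum, sum_range_succ', mul_sum, ← pow_add]
  ring_nf

theorem nonneg : 0 ≤ evenPowSum lam m :=
  sum_nonneg fun j _ => by rw [pow_mul]; positivity

theorem add_pow_succ :
    evenPowSum lam (m + 1) + lam ^ (2 * (m + 1)) =
      1 + lam ^ 2 * (evenPowSum lam m + lam ^ (2 * m)) := by
  rw [succ]
  ring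

theorem mem_Aprime : evenPowSum lam m ∈ Aprime lam (2 * m + 1) := by
  induction m with
  | zero => exact Aprime.mem_succ_iff.2 ⟨false, 0, by simp [Aprime.zero_eq], by simp⟩
  | succ m ih => rw [succ]; exact Aprime.one_add_sq_mul_mem ih

theorem add_pow_mem_Aprime : evenPowSum lam m + lam ^ (2 * m) ∈ Aprime lam (2 * m + 1) := by
  induction m with
  | zero => exact Aprime.mem_succ_iff.2 ⟨true, 0, by simp [Aprime.zero_eq], by simp⟩
  | succ m ih => rw [add_pow_succ]; exact Aprime.one_add_sq_mul_mem ih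

theorem add_pow_le_one_add (h0 : 0 ≤ lam) (h1 : lam + lam ^ 2 ≤ 1) :
    evenPowSum lam m + lam ^ (2 * m) ≤ 1 + lam := by
  induction m with
  | zero => simp [h0]
  | succ m ih =>
    rw [add_pow_succ]
    nlinarith [mul_le_mul_of_nonneg_left ih (sq_nonneg lam)]

end evenPowSum

namespace Aprime

variable {lam z : ℝ} {m : ℕ}

theorem le_one_add_mul_evenPowSum (h0 : 0 ≤ lam) (hz : z ∈ Aprime lam (2 * m)) :
    z ≤ (1 + lam) * evenPowSum lam m := by
  induction m generalizing z with
  | zero => simp_all [zero_eq]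
  | succ m ih =>
    obtain ⟨b, w', hw', rfl⟩ := mem_succ_iff.1 hz
    obtain ⟨c, w, hw, rfl⟩ := mem_succ_iff.1 hw'
    have hb : (if b then (1 : ℝ) else 0) ≤ 1 := by split_ifs <;> norm_num
    have hc : (if c then (1 : ℝ) else 0) ≤ 1 := by split_ifs <;> norm_num
    have hw_le := mul_le_mul_of_nonneg_left (ih hw) (sq_nonneg lam)
    rw [evenPowSum.succ]
    nlinarith

theorem le_evenPowSum_or_add_pow_le (h0 : 0 ≤ lam) (h1 : lam + lam ^ 2 ≤ 1)
    (hz : z ∈ Aprime lam (2 * m + 1)) :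
    z ≤ evenPowSum lam m ∨ evenPowSum lam m + lam ^ (2 * m) ≤ z := by
  induction m generalizing z with
  | zero =>
    obtain ⟨b, w, hw, rfl⟩ := mem_succ_iff.1 hz
    rw [zero_eq, Set.mem_singleton_iff] at hw
    cases b <;> simp [hw]
  | succ m ih =>
    obtain ⟨b, w', hw', rfl⟩ := mem_succ_iff.1 hz
    cases b
    case false =>
      left
      have hw'_le := le_one_add_mul_evenPowSum (m := m + 1) h0 hw'
      have hS := evenPowSum.nonneg (lam := lam) (m := m + 1)
      simp only [Bool.false_eq_true, if_false, zero_add]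
      nlinarith [mul_le_mul_of_nonneg_left hw'_le h0, mul_le_mul_of_nonneg_right h1 hS]
    case true =>
      obtain ⟨c, w, hw, rfl⟩ := mem_succ_iff.1 hw'
      cases c
      case false =>
        simp only [if_true, Bool.false_eq_true, if_false, zero_add]
        rw [evenPowSum.add_pow_succ, evenPowSum.succ]
        rcases ih hw with hle | hle
        · exact Or.inl (by nlinarith [sq_nonneg lam])
        · exact Or.inr (by nlinarith [sq_nonneg lam])
      case true =>
        right
        have hw0 := nonneg h0 hw
        have hy := evenPowSum.add_pow_le_one_add (m := m + 1) h0 h1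
        simp only [if_true]
        nlinarith [mul_nonneg (sq_nonneg lam) hw0]

end Aprime

theorem stmt_19_general (lam : ℝ) (hlam : lam ∈ Set.Ioo (1/2 : ℝ) ((Real.sqrt 5 - 1) / 2))
    (N : ℕ) (hodd : Odd N) :
    (∑ j ∈ Finset.range ((N - 1) / 2), lam ^ (2 * j)) ∈ Aprime lam N ∧
    (∑ j ∈ Finset.range ((N - 1) / 2), lam ^ (2 * j)) + lam ^ (N - 1) ∈ Aprime lam N ∧
    ∀ z ∈ Aprime lam N,
      ¬((∑ j ∈ Finset.range ((N - 1) / 2), lam ^ (2 * j)) < z ∧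
        z < (∑ j ∈ Finset.range ((N - 1) / 2), lam ^ (2 * j)) + lam ^ (N - 1)) := by
  obtain ⟨hlam1, hlam2⟩ := hlam
  have h0 : 0 ≤ lam := by linarith
  have h1 : lam + lam ^ 2 ≤ 1 := by
    have h5 : Real.sqrt 5 ^ 2 = 5 := Real.sq_sqrt (by norm_num)
    nlinarith [Real.sqrt_nonneg 5]
  obtain ⟨m, rfl⟩ := hodd
  rw [Nat.add_sub_cancel, Nat.mul_div_cancel_left m two_pos]
  refine ⟨evenPowSum.mem_Aprime, evenPowSum.add_pow_mem_Aprime, fun z hz ⟨hlt, hgt⟩ => ?_⟩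
  rcases Aprime.le_evenPowSum_or_add_pow_le h0 h1 hz with hle | hle
  · exact (hle.trans_lt hlt).false
  · exact (hle.trans_lt hgt).false

/-- For `λ ∈ (1/2, (√5-1)/2)` and odd `N ≥ 3`, the points
`x = 1 + λ² + ⋯ + λ^{N-3}` and `y = x + λ^{N-1}` are consecutive elements of `A'_N(λ)`;
in particular the largest gap `λ^{N-1}` is attained away from the endpoints. -/
theorem stmt_19 (lam : ℝ) (hlam : lam ∈ Set.Ioo (1/2 : ℝ) ((Real.sqrt 5 - 1) / 2))
    (N : ℕ) (hN : 3 ≤ N) (hodd : Odd N) :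
    (∑ j ∈ Finset.range ((N - 1) / 2), lam ^ (2 * j)) ∈ Aprime lam N ∧
    (∑ j ∈ Finset.range ((N - 1) / 2), lam ^ (2 * j)) + lam ^ (N - 1) ∈ Aprime lam N ∧
    ∀ z ∈ Aprime lam N,
      ¬((∑ j ∈ Finset.range ((N - 1) / 2), lam ^ (2 * j)) < z ∧
        z < (∑ j ∈ Finset.range ((N - 1) / 2), lam ^ (2 * j)) + lam ^ (N - 1)) :=
  stmt_19_general lam hlam N hodd
end
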